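/- arXiv:2401.11213 — 2 statements merged into one kernel-verified Lean document; each statement's English description precedes it below -/
import Mathlib

section
/- Let P be an orthogonal projection on a Hilbert space H and M a bounded self-adjoint operator with 0 ≤ M ≤ 1. Suppose ψ ∈ H satisfies ψ = M P M ψ. Then, setting ψ̃ = P M ψ, one has (1 − M²)ψ̃ = 0. -/
/-!
Since `0 ≤ M ≤ 1` makes `M` a contraction and `P` is an orthogonal projection, the vector
`x = M² ψ̃ = M ψ`, which satisfies `P x = ψ̃`, obeys `‖x‖ ≤ ‖ψ̃‖ = ‖P x‖ ≤ ‖x‖`. Equality in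
`‖P x‖ ≤ ‖x‖` forces `x` into the range of `P`, so `M² ψ̃ = x = P x = ψ̃`.
-/

section

variable {H : Type*} [NormedAddCommGroup H] [InnerProductSpace ℂ H] [CompleteSpace H]

theorem ContinuousLinearMap.norm_le_one_of_isPositive_of_isPositive_one_sub {M : H →L[ℂ] H}
    (hM : M.IsPositive) (hM₁ : (1 - M).IsPositive) : ‖M‖ ≤ 1 :=
  (CStarAlgebra.norm_le_one_iff_of_nonneg M ((nonneg_iff_isPositive M).mpr hM)).mpr
    ((le_def M 1).mpr hM₁)

theorem IsStarProjection.apply_eq_self_of_norm_le {P : H →L[ℂ] H} (hP : IsStarProjection P)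
    {x : H} (hx : ‖x‖ ≤ ‖P x‖) : P x = x := by
  obtain ⟨K, _, rfl⟩ := isStarProjection_iff_eq_starProjection.mp hP
  exact K.starProjection_eq_self_iff.mpr <|
    (K.mem_iff_norm_starProjection x).mpr (le_antisymm (K.norm_starProjection_apply_le x) hx)

end

theorem proj_mul_fixed_point_general {H : Type*} [NormedAddCommGroup H] [InnerProductSpace ℂ H]
    [CompleteSpace H] (P M : H →L[ℂ] H)
    (hPidem : IsIdempotentElem P) (hPsa : IsSelfAdjoint P)
    (hMpos : M.IsPositive)
    (hMle : ((1 : H →L[ℂ] H) - M).IsPositive)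
    (ψ : H) (hψ : ψ = M (P (M ψ))) :
    ((1 : H →L[ℂ] H) - M * M) (P (M ψ)) = 0 := by
  set φ := P (M ψ)
  have hPx : P ((M * M) φ) = φ := by rw [mul_apply_eq_comp, ← hψ]
  have hM : ‖M‖ ≤ 1 :=
    ContinuousLinearMap.norm_le_one_of_isPositive_of_isPositive_one_sub hMpos hMle
  have hx : ‖(M * M) φ‖ ≤ ‖P ((M * M) φ)‖ := by
    rw [hPx, mul_apply_eq_comp]
    calc ‖M (M φ)‖ ≤ ‖M φ‖ := by simpa using M.le_of_opNorm_le hM (M φ)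
      _ ≤ ‖φ‖ := by simpa using M.le_of_opNorm_le hM φ
  have hfix : (M * M) φ = φ := by
    rw [← IsStarProjection.apply_eq_self_of_norm_le ⟨hPidem, hPsa⟩ hx, hPx]
  rw [sub_apply, one_apply_eq_self, hfix, sub_self]

/-- Let `P` be an orthogonal projection and `M` a bounded self-adjoint operator with
`0 ≤ M ≤ 1` on a Hilbert space `H`. If `ψ = M P M ψ`, then `ψ̃ = P M ψ` satisfies
`(1 − M²) ψ̃ = 0`. -/
theorem proj_mul_fixed_point {H : Type*} [NormedAddCommGroup H] [InnerProductSpace ℂ H]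
    [CompleteSpace H] (P M : H →L[ℂ] H)
    (hPidem : IsIdempotentElem P) (hPsa : IsSelfAdjoint P)
    (hMsa : IsSelfAdjoint M) (hMpos : M.IsPositive)
    (hMle : ((1 : H →L[ℂ] H) - M).IsPositive)
    (ψ : H) (hψ : ψ = M (P (M ψ))) :
    ((1 : H →L[ℂ] H) - M * M) (P (M ψ)) = 0 :=
  proj_mul_fixed_point_general P M hPidem hPsa hMpos hMle ψ hψ
end

section
/- Suppose v(x,t) = k(ζ)/x + xt/2 − (4α²−1)/(8x) with ζ = x²(r−t), where r ∈ ℝ is a parameter and k is smooth. Then v satisfies (2v_x − t)v_t² + (1/4)v_{xt}² − (1/2)v_{xxt}v_t = α²/4 if and only if k satisfies the ODE (α² − 4ζ)(k')² − k'(α² + 2ζ(ζk''' + k'') − ζ) + 4ζ(k')³ − (1/2)k(1 − 2k')² + ζ(ζk''' + ζ(k'')² + k'') = 0. -/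
/-- Partial derivative in the first variable. -/
noncomputable def px (f : ℝ → ℝ → ℝ) : ℝ → ℝ → ℝ := fun x t => deriv (fun y => f y t) x

/-- Partial derivative in the second variable. -/
noncomputable def pt (f : ℝ → ℝ → ℝ) : ℝ → ℝ → ℝ := fun x t => deriv (fun s => f x s) t

private lemma hasDerivAt_congr_val {f : ℝ → ℝ} {a b x : ℝ} (h : HasDerivAt f a x)
    (hab : a = b) : HasDerivAt f b x := hab ▸ h

noncomputable def Vf (α r : ℝ) (k : ℝ → ℝ) : ℝ → ℝ → ℝ := fun x t =>
  k (x ^ 2 * (r - t)) / x + x * t / 2 - (4 * α ^ 2 - 1) / (8 * x)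

set_option maxHeartbeats 1600000 in
/-- For the self-similar ansatz `v(x,t) = k(ζ)/x + xt/2 − (4α²−1)/(8x)`, `ζ = x²(r−t)`,
the PDE `(2v_x − t)v_t² + (1/4)v_{xt}² − (1/2)v_{xxt}v_t = α²/4` holds at `(x,t)` if and
only if `k` satisfies the third-order ODE at `ζ = x²(r−t)`. -/
theorem selfSimilar_PDE_iff_ODE (α r : ℝ) (k : ℝ → ℝ) (hk : ContDiff ℝ (⊤ : ℕ∞) k)
    (x t : ℝ) (hx : 0 < x) :
    (let v : ℝ → ℝ → ℝ := fun x t =>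
        k (x ^ 2 * (r - t)) / x + x * t / 2 - (4 * α ^ 2 - 1) / (8 * x);
      (2 * px v x t - t) * (pt v x t) ^ 2 + (1/4) * (px (pt v) x t) ^ 2
        - (1/2) * px (px (pt v)) x t * pt v x t = α ^ 2 / 4) ↔
    (let ζ := x ^ 2 * (r - t);
     let k' := deriv k;
     let k'' := deriv (deriv k);
     let k''' := deriv (deriv (deriv k));
      (α ^ 2 - 4 * ζ) * (k' ζ) ^ 2
        - k' ζ * (α ^ 2 + 2 * ζ * (ζ * k''' ζ + k'' ζ) - ζ)
        + 4 * ζ * (k' ζ) ^ 3 - (1/2) * k ζ * (1 - 2 * k' ζ) ^ 2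
        + ζ * (ζ * k''' ζ + ζ * (k'' ζ) ^ 2 + k'' ζ) = 0) := by
  have h0 : ContDiff ℝ ((⊤ : ℕ∞) : WithTop ℕ∞) k := hk.of_le (by simp)
  have h1 := (contDiff_infty_iff_deriv.mp h0).2
  have h2 := (contDiff_infty_iff_deriv.mp h1).2
  have d0 : Differentiable ℝ k := (contDiff_infty_iff_deriv.mp h0).1
  have d1 : Differentiable ℝ (deriv k) := (contDiff_infty_iff_deriv.mp h1).1
  have d2 : Differentiable ℝ (deriv (deriv k)) := (contDiff_infty_iff_deriv.mp h2).1
  -- derivative of the inner map y ↦ y^2 * (r - s)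
  have hq : ∀ (y s : ℝ), HasDerivAt (fun z : ℝ => z ^ 2 * (r - s)) (2 * y * (r - s)) y := by
    intro y s
    exact hasDerivAt_congr_val ((hasDerivAt_pow 2 y).mul_const (r - s)) (by push_cast; ring)
  -- ∂t formula
  have hpt : ∀ (y s : ℝ), y ≠ 0 →
      pt (Vf α r k) y s = y / 2 - y * deriv k (y ^ 2 * (r - s)) := by
    intro y s hy
    have hin : HasDerivAt (fun s : ℝ => y ^ 2 * (r - s)) (-y ^ 2) s :=
      hasDerivAt_congr_val (((hasDerivAt_const s r).sub (hasDerivAt_id' s)).const_mul (y ^ 2))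
        (by ring)
    have hcomp : HasDerivAt (fun s : ℝ => k (y ^ 2 * (r - s)))
        (deriv k (y ^ 2 * (r - s)) * -y ^ 2) s := (d0 _).hasDerivAt.comp s hin
    have hD : HasDerivAt (fun s : ℝ => k (y ^ 2 * (r - s)) / y + y * s / 2 - (4 * α ^ 2 - 1) / (8 * y))
        (deriv k (y ^ 2 * (r - s)) * -y ^ 2 / y + y * 1 / 2) s :=
      ((hcomp.div_const y).add (((hasDerivAt_id' s).const_mul y).div_const 2)).sub_const _
    have hval : pt (Vf α r k) y s = deriv k (y ^ 2 * (r - s)) * -y ^ 2 / y + y * 1 / 2 := hD.deriv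
    rw [hval]; field_simp; ring
  -- ∂x∂t formula
  have hpxpt : ∀ y : ℝ, 0 < y → px (pt (Vf α r k)) y t
      = 1 / 2 - deriv k (y ^ 2 * (r - t))
        - 2 * y ^ 2 * (r - t) * deriv (deriv k) (y ^ 2 * (r - t)) := by
    intro y hy
    have heq : (fun z => pt (Vf α r k) z t) =ᶠ[nhds y]
        (fun z => z / 2 - z * deriv k (z ^ 2 * (r - t))) := by
      filter_upwards [eventually_ne_nhds hy.ne'] with z hz using hpt z t hz
    have hg : HasDerivAt (fun z : ℝ => z / 2 - z * deriv k (z ^ 2 * (r - t)))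
        (1 / 2 - (1 * deriv k (y ^ 2 * (r - t))
          + y * (deriv (deriv k) (y ^ 2 * (r - t)) * (2 * y * (r - t))))) y :=
      ((hasDerivAt_id' y).div_const 2).sub
        ((hasDerivAt_id' y).mul ((d1 _).hasDerivAt.comp y (hq y t)))
    have : px (pt (Vf α r k)) y t = deriv (fun z => pt (Vf α r k) z t) y := rfl
    rw [this, heq.deriv_eq, hg.deriv]; ring
  -- ∂x∂x∂t formula
  have hpxxt : px (px (pt (Vf α r k))) x t
      = -6 * x * (r - t) * deriv (deriv k) (x ^ 2 * (r - t))
        - 4 * x ^ 3 * (r - t) ^ 2 * deriv (deriv (deriv k)) (x ^ 2 * (r - t)) := by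
    have heq : (fun y => px (pt (Vf α r k)) y t) =ᶠ[nhds x]
        (fun y => 1 / 2 - deriv k (y ^ 2 * (r - t))
          - 2 * y ^ 2 * (r - t) * deriv (deriv k) (y ^ 2 * (r - t))) := by
      filter_upwards [eventually_gt_nhds hx] with y hy using hpxpt y hy
    have hu : HasDerivAt (fun y : ℝ => 2 * y ^ 2 * (r - t)) (4 * x * (r - t)) x := by
      have := (((hasDerivAt_pow 2 x).const_mul (2 : ℝ)).mul_const (r - t))
      exact hasDerivAt_congr_val this (by push_cast; ring)
    have hg : HasDerivAt (fun y : ℝ => 1 / 2 - deriv k (y ^ 2 * (r - t))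
          - 2 * y ^ 2 * (r - t) * deriv (deriv k) (y ^ 2 * (r - t)))
        (0 - deriv (deriv k) (x ^ 2 * (r - t)) * (2 * x * (r - t))
          - (4 * x * (r - t) * deriv (deriv k) (x ^ 2 * (r - t))
            + 2 * x ^ 2 * (r - t) * (deriv (deriv (deriv k)) (x ^ 2 * (r - t)) * (2 * x * (r - t))))) x :=
      ((hasDerivAt_const x (1 / 2 : ℝ)).sub ((d1 _).hasDerivAt.comp x (hq x t))).sub
        (hu.mul ((d2 _).hasDerivAt.comp x (hq x t)))
    have : px (px (pt (Vf α r k))) x t = deriv (fun y => px (pt (Vf α r k)) y t) x := rfl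
    rw [this, heq.deriv_eq, hg.deriv]; ring
  -- ∂x formula
  have hpxv : px (Vf α r k) x t
      = 2 * (r - t) * deriv k (x ^ 2 * (r - t)) - k (x ^ 2 * (r - t)) / x ^ 2
        + t / 2 + (4 * α ^ 2 - 1) / (8 * x ^ 2) := by
    have hnum : HasDerivAt (fun y : ℝ => k (y ^ 2 * (r - t)))
        (deriv k (x ^ 2 * (r - t)) * (2 * x * (r - t))) x := (d0 _).hasDerivAt.comp x (hq x t)
    have hD : HasDerivAt (fun y : ℝ => k (y ^ 2 * (r - t)) / y + y * t / 2 - (4 * α ^ 2 - 1) / (8 * y))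
        ((deriv k (x ^ 2 * (r - t)) * (2 * x * (r - t)) * x - k (x ^ 2 * (r - t)) * 1) / x ^ 2
          + 1 * t / 2 - (0 * (8 * x) - (4 * α ^ 2 - 1) * (8 * 1)) / (8 * x) ^ 2) x :=
      ((hnum.div (hasDerivAt_id' x) hx.ne').add
        (((hasDerivAt_id' x).mul_const t).div_const 2)).sub
        ((hasDerivAt_const x (4 * α ^ 2 - 1)).div ((hasDerivAt_id' x).const_mul 8)
          (by positivity))
    rw [show px (Vf α r k) x t
        = (deriv k (x ^ 2 * (r - t)) * (2 * x * (r - t)) * x - k (x ^ 2 * (r - t)) * 1) / x ^ 2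
          + 1 * t / 2 - (0 * (8 * x) - (4 * α ^ 2 - 1) * (8 * 1)) / (8 * x) ^ 2 from hD.deriv]
    field_simp
    ring
  show (2 * px (Vf α r k) x t - t) * (pt (Vf α r k) x t) ^ 2
      + (1/4) * (px (pt (Vf α r k)) x t) ^ 2
      - (1/2) * px (px (pt (Vf α r k))) x t * pt (Vf α r k) x t = α ^ 2 / 4 ↔
    (α ^ 2 - 4 * (x ^ 2 * (r - t))) * (deriv k (x ^ 2 * (r - t))) ^ 2
      - deriv k (x ^ 2 * (r - t)) * (α ^ 2 + 2 * (x ^ 2 * (r - t)) * ((x ^ 2 * (r - t)) * deriv (deriv (deriv k)) (x ^ 2 * (r - t)) + deriv (deriv k) (x ^ 2 * (r - t))) - x ^ 2 * (r - t))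
      + 4 * (x ^ 2 * (r - t)) * (deriv k (x ^ 2 * (r - t))) ^ 3
      - (1/2) * k (x ^ 2 * (r - t)) * (1 - 2 * deriv k (x ^ 2 * (r - t))) ^ 2
      + (x ^ 2 * (r - t)) * ((x ^ 2 * (r - t)) * deriv (deriv (deriv k)) (x ^ 2 * (r - t)) + (x ^ 2 * (r - t)) * (deriv (deriv k) (x ^ 2 * (r - t))) ^ 2 + deriv (deriv k) (x ^ 2 * (r - t))) = 0
  rw [hpt x t hx.ne', hpxpt x hx, hpxxt, hpxv, ← sub_eq_zero]
  constructor
  · intro h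
    rw [← h]
    field_simp
    ring
  · intro h
    rw [← h]
    field_simp
    ring
end
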